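/- arXiv:cs/0703010 — 3 statements merged into one kernel-verified Lean document; each statement's English description precedes it below -/
import Mathlib

section
/- Let n ≥ 1, let c : {1,…,n} → ℝ be a nondecreasing sequence of nonnegative reals, and let y : {1,…,n} → ℝ satisfy 0 < y_l ≤ 1 for all l. Then (Σ_{l=1}^{n} (Π_{o=1}^{l−1}(1 − y_o)) · y_l · c_l) · (Σ_{l=1}^{n} y_l) ≤ (Σ_{l=1}^{n} y_l · c_l) · (Σ_{l=1}^{n} (Π_{o=1}^{l−1}(1 − y_o)) · y_l). -/
open Finset

/-- Weighted Chebyshev-type inequality: if `f` and `g` antivary on `s` and weights `w`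
are nonnegative, then `(∑ w f g)(∑ w) ≤ (∑ w f)(∑ w g)`. -/
lemma cheb_aux {ι : Type*} (s : Finset ι) (w f g : ι → ℝ) (hw : ∀ i ∈ s, 0 ≤ w i)
    (hfg : ∀ i ∈ s, ∀ j ∈ s, (f i - f j) * (g i - g j) ≤ 0) :
    (∑ i ∈ s, w i * f i * g i) * (∑ i ∈ s, w i) ≤
      (∑ i ∈ s, w i * f i) * (∑ i ∈ s, w i * g i) := by
  have hD : (∑ i ∈ s, ∑ j ∈ s, w i * w j * ((f i - f j) * (g i - g j))) ≤ 0 :=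
    Finset.sum_nonpos fun i hi => Finset.sum_nonpos fun j hj =>
      mul_nonpos_of_nonneg_of_nonpos (mul_nonneg (hw i hi) (hw j hj)) (hfg i hi j hj)
  have hA : ∑ i ∈ s, ∑ j ∈ s, w i * w j * (f i * g i)
      = (∑ i ∈ s, w i * f i * g i) * (∑ i ∈ s, w i) := by
    rw [Finset.sum_mul_sum]
    exact Finset.sum_congr rfl fun i _ => Finset.sum_congr rfl fun j _ => by ring
  have hB : ∑ i ∈ s, ∑ j ∈ s, w i * w j * (f i * g j)
      = (∑ i ∈ s, w i * f i) * (∑ i ∈ s, w i * g i) := by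
    rw [Finset.sum_mul_sum]
    exact Finset.sum_congr rfl fun i _ => Finset.sum_congr rfl fun j _ => by ring
  have hC : ∑ i ∈ s, ∑ j ∈ s, w i * w j * (f j * g i)
      = (∑ i ∈ s, w i * f i) * (∑ i ∈ s, w i * g i) := by
    rw [Finset.sum_comm, ← hB]
    exact Finset.sum_congr rfl fun i _ => Finset.sum_congr rfl fun j _ => by ring
  have hE : ∑ i ∈ s, ∑ j ∈ s, w i * w j * (f j * g j)
      = (∑ i ∈ s, w i * f i * g i) * (∑ i ∈ s, w i) := by
    rw [Finset.sum_comm, ← hA]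
    exact Finset.sum_congr rfl fun i _ => Finset.sum_congr rfl fun j _ => by ring
  have key : (∑ i ∈ s, ∑ j ∈ s, w i * w j * ((f i - f j) * (g i - g j)))
      = 2 * ((∑ i ∈ s, w i * f i * g i) * (∑ i ∈ s, w i))
        - 2 * ((∑ i ∈ s, w i * f i) * (∑ i ∈ s, w i * g i)) := by
    have expand : (∑ i ∈ s, ∑ j ∈ s, w i * w j * ((f i - f j) * (g i - g j)))
        = (∑ i ∈ s, ∑ j ∈ s, w i * w j * (f i * g i))
          - (∑ i ∈ s, ∑ j ∈ s, w i * w j * (f i * g j))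
          - (∑ i ∈ s, ∑ j ∈ s, w i * w j * (f j * g i))
          + (∑ i ∈ s, ∑ j ∈ s, w i * w j * (f j * g j)) := by
      simp only [← Finset.sum_sub_distrib, ← Finset.sum_add_distrib]
      exact Finset.sum_congr rfl fun i _ => Finset.sum_congr rfl fun j _ => by ring
    rw [expand, hA, hB, hC, hE]; ring
  linarith

/-- The weighted average of the nondecreasing distances `c l` with weights
`(∏_{o<l}(1 - y o)) * y l` is at most their weighted average with weights `y l`,
stated in cross-multiplied form. -/
theorem stmt_3 (n : ℕ) (hn : 1 ≤ n) (c : ℕ → ℝ)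
    (hc_nonneg : ∀ l ∈ Finset.Icc 1 n, 0 ≤ c l)
    (hc_mono : ∀ l ∈ Finset.Icc 1 n, ∀ l' ∈ Finset.Icc 1 n, l ≤ l' → c l ≤ c l')
    (y : ℕ → ℝ) (hy : ∀ l ∈ Finset.Icc 1 n, 0 < y l ∧ y l ≤ 1) :
    (∑ l ∈ Finset.Icc 1 n, (∏ o ∈ Finset.Icc 1 (l - 1), (1 - y o)) * y l * c l) *
        (∑ l ∈ Finset.Icc 1 n, y l) ≤
      (∑ l ∈ Finset.Icc 1 n, y l * c l) *
        (∑ l ∈ Finset.Icc 1 n, (∏ o ∈ Finset.Icc 1 (l - 1), (1 - y o)) * y l) := by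
  set P : ℕ → ℝ := fun l => ∏ o ∈ Finset.Icc 1 (l - 1), (1 - y o) with hP
  -- factors are in [0,1]
  have hfac : ∀ l ∈ Finset.Icc 1 n, ∀ o ∈ Finset.Icc 1 (l - 1), 0 ≤ 1 - y o ∧ 1 - y o ≤ 1 := by
    intro l hl o ho
    rw [Finset.mem_Icc] at hl ho
    have hon : o ∈ Finset.Icc 1 n := Finset.mem_Icc.mpr ⟨ho.1, by omega⟩
    have := hy o hon
    constructor <;> linarith [this.1, this.2]
  -- P is nonincreasing on Icc 1 n
  have hPmono : ∀ i ∈ Finset.Icc 1 n, ∀ j ∈ Finset.Icc 1 n, i ≤ j → P j ≤ P i := by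
    intro i hi j hj hij
    have hsub : Finset.Icc 1 (i - 1) ⊆ Finset.Icc 1 (j - 1) :=
      Finset.Icc_subset_Icc_right (by omega)
    have hsplit := Finset.prod_sdiff (f := fun o => 1 - y o) hsub
    have h1 : ∏ o ∈ Finset.Icc 1 (j - 1) \ Finset.Icc 1 (i - 1), (1 - y o) ≤ 1 := by
      refine Finset.prod_le_one (fun o ho => ?_) (fun o ho => ?_)
      · exact (hfac j hj o (Finset.mem_sdiff.mp ho).1).1
      · exact (hfac j hj o (Finset.mem_sdiff.mp ho).1).2
    have h2 : 0 ≤ ∏ o ∈ Finset.Icc 1 (i - 1), (1 - y o) :=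
      Finset.prod_nonneg fun o ho => (hfac i hi o ho).1
    calc P j = (∏ o ∈ Finset.Icc 1 (j - 1) \ Finset.Icc 1 (i - 1), (1 - y o)) *
          ∏ o ∈ Finset.Icc 1 (i - 1), (1 - y o) := hsplit.symm
      _ ≤ 1 * ∏ o ∈ Finset.Icc 1 (i - 1), (1 - y o) := by
          exact mul_le_mul_of_nonneg_right h1 h2
      _ = P i := by rw [one_mul]
  have hfg : ∀ i ∈ Finset.Icc 1 n, ∀ j ∈ Finset.Icc 1 n, (c i - c j) * (P i - P j) ≤ 0 := by
    intro i hi j hj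
    rcases le_total i j with h | h
    · exact mul_nonpos_of_nonpos_of_nonneg (by linarith [hc_mono i hi j hj h])
        (by linarith [hPmono i hi j hj h])
    · exact mul_nonpos_of_nonneg_of_nonpos (by linarith [hc_mono j hj i hi h])
        (by linarith [hPmono j hj i hi h])
  have hw : ∀ i ∈ Finset.Icc 1 n, 0 ≤ y i := fun i hi => (hy i hi).1.le
  have main := cheb_aux (Finset.Icc 1 n) y c P hw hfg
  have h1 : ∑ l ∈ Finset.Icc 1 n, (∏ o ∈ Finset.Icc 1 (l - 1), (1 - y o)) * y l * c l
      = ∑ l ∈ Finset.Icc 1 n, y l * c l * P l :=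
    Finset.sum_congr rfl fun l _ => by rw [hP]; ring
  have h2 : ∑ l ∈ Finset.Icc 1 n, (∏ o ∈ Finset.Icc 1 (l - 1), (1 - y o)) * y l
      = ∑ l ∈ Finset.Icc 1 n, y l * P l :=
    Finset.sum_congr rfl fun l _ => by rw [hP]; ring
  rw [h1, h2]
  exact main
end

section
/- Let (Ω, P) be a probability space, let A be a nonempty finite index set, let (X_i)_{i∈A} be mutually independent random variables taking values in {0,1} with P(X_i = 1) = y_i where 0 < y_i ≤ 1 for each i ∈ A, and let c_i ≥ 0 for i ∈ A be real numbers. Then E[ 1_{{ω : ∃ i ∈ A, X_i(ω) = 1}} · min{ c_i : i ∈ A, X_i(ω) = 1 } ] ≤ ( (Σ_{i∈A} y_i c_i)/(Σ_{i∈A} y_i) ) · P(∃ i ∈ A, X_i = 1). -/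
/-!
Sort the facilities so that `c` is nondecreasing. The event that facility `k` is the first open
one has probability `y k * w k` with `w k = ∏_{j < k} (1 - y j)`, and on it the closest open
facility is at distance `c k`. Hence the left side is `∑ y k w k c k` and
`P(some facility is open) = ∑ y k w k`. Since `w` is nonincreasing while `c` is nondecreasing,
the weighted Chebyshev sum inequality gives `(∑ y w c) (∑ y) ≤ (∑ y c) (∑ y w)`.
-/

open MeasureTheory ProbabilityTheory Finset

theorem Antivary.sum_mul_mul_mul_sum_le {ι : Type*} (s : Finset ι) {u a w : ι → ℝ}
    (hu : ∀ i ∈ s, 0 ≤ u i) (haw : Antivary a w) :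
    (∑ i ∈ s, u i * a i * w i) * ∑ i ∈ s, u i ≤ (∑ i ∈ s, u i * a i) * ∑ i ∈ s, u i * w i := by
  have hnonpos : ∑ i ∈ s, ∑ j ∈ s, u i * u j * ((a j - a i) * (w j - w i)) ≤ 0 :=
    sum_nonpos fun i hi => sum_nonpos fun j hj =>
      mul_nonpos_of_nonneg_of_nonpos (mul_nonneg (hu i hi) (hu j hj)) (haw.sub_mul_sub_nonpos i j)
  have hexpand : ∑ i ∈ s, ∑ j ∈ s, u i * u j * ((a j - a i) * (w j - w i)) =
      (∑ i ∈ s, u i) * (∑ i ∈ s, u i * a i * w i)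
        - (∑ i ∈ s, u i * w i) * (∑ i ∈ s, u i * a i)
        - (∑ i ∈ s, u i * a i) * (∑ i ∈ s, u i * w i)
        + (∑ i ∈ s, u i * a i * w i) * ∑ i ∈ s, u i := by
    simp only [sum_mul_sum, ← sum_add_distrib, ← sum_sub_distrib]
    exact sum_congr rfl fun i _ => sum_congr rfl fun j _ => by ring
  linarith

theorem Antivary.sum_mul_mul_le_div_mul {ι : Type*} (s : Finset ι) {u a w : ι → ℝ}
    (hu : ∀ i ∈ s, 0 ≤ u i) (haw : Antivary a w) :
    ∑ i ∈ s, u i * a i * w i ≤ (∑ i ∈ s, u i * a i) / (∑ i ∈ s, u i) * ∑ i ∈ s, u i * w i := by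
  rcases (sum_nonneg hu).eq_or_lt with hzero | hpos
  · have hu0 : ∀ i ∈ s, u i = 0 := (sum_eq_zero_iff_of_nonneg hu).1 hzero.symm
    rw [sum_eq_zero fun i hi => by rw [hu0 i hi, zero_mul, zero_mul], ← hzero, div_zero, zero_mul]
  · rw [div_mul_eq_mul_div, le_div_iff₀ hpos]
    exact haw.sum_mul_mul_mul_sum_le s hu

section Disjointed

variable {Ω ι : Type*} [LinearOrder ι] [LocallyFiniteOrderBot ι]

theorem measurableSet_disjointed [MeasurableSpace Ω] {s : ι → Set Ω}
    (hs : ∀ i, MeasurableSet (s i)) (k : ι) : MeasurableSet (disjointed s k) :=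
  disjointedRec (fun _ i ht => ht.diff (hs i)) (hs k)

theorem ProbabilityTheory.iIndepFun.measure_disjointed_preimage [MeasurableSpace Ω]
    {P : Measure Ω} {β : Type*} [MeasurableSpace β] {X : ι → Ω → β} (hX : iIndepFun X P)
    {B : Set β} (hB : MeasurableSet B) (k : ι) :
    P (disjointed (fun i => X i ⁻¹' B) k) = P (X k ⁻¹' B) * ∏ j ∈ Iio k, P (X j ⁻¹' Bᶜ) := by
  classical
  let pattern : ι → Set β := fun i => if i = k then B else Bᶜ
  have hpattern : disjointed (fun i => X i ⁻¹' B) k = ⋂ i ∈ Iic k, X i ⁻¹' pattern i := by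
    rw [disjointed_eq_inter_compl, ← Iio_insert, Finset.set_biInter_insert]
    simp only [pattern, if_pos rfl, mem_Iio]
    congr 1
    refine Set.iInter₂_congr fun j hj => ?_
    rw [if_neg hj.ne, Set.preimage_compl]
  rw [hpattern, hX.measure_inter_preimage_eq_mul _ fun i _ => ?_, ← Iio_insert,
    prod_insert notMem_Iio_self]
  · simp only [pattern, if_pos rfl]
    congr 1
    exact prod_congr rfl fun j hj => by rw [if_neg (mem_Iio.1 hj).ne]
  · dsimp only [pattern]
    split_ifs
    exacts [hB, hB.compl]

theorem sInf_image_eq_of_mem_disjointed {α : Type*} [ConditionallyCompleteLinearOrder α]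
    {s : ι → Set Ω} {c : ι → α} (hc : Monotone c) {k : ι} {ω : Ω}
    (hω : ω ∈ disjointed s k) : sInf (c '' {i | ω ∈ s i}) = c k := by
  rw [disjointed_eq_inter_compl] at hω
  refine IsLeast.csInf_eq ⟨⟨k, hω.1, rfl⟩, ?_⟩
  rintro _ ⟨i, hi, rfl⟩
  exact hc (not_lt.1 fun hik => Set.mem_iInter₂.1 hω.2 i hik hi)

theorem indicator_iUnion_sInf_image_eq_sum [Fintype ι] {M : Type*}
    [ConditionallyCompleteLinearOrder M] [AddCommMonoid M] {s : ι → Set Ω} {c : ι → M}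
    (hc : Monotone c) (ω : Ω) :
    (⋃ i, s i).indicator (fun ω => sInf (c '' {i | ω ∈ s i})) ω =
      ∑ k, (disjointed s k).indicator (fun _ => c k) ω := by
  have hunion : ⋃ i, s i = ⋃ k ∈ (univ : Finset ι), disjointed s k := by
    simp only [mem_univ, Set.iUnion_true, iUnion_disjointed]
  rw [hunion, indicator_biUnion_apply _ _ fun k _ l _ hkl => disjoint_disjointed s hkl]
  exact sum_congr rfl fun k _ =>
    congrFun (Set.indicator_congr fun _ h => sInf_image_eq_of_mem_disjointed hc h) ω

theorem integral_indicator_sInf_le_of_monotone [Fintype ι] [MeasurableSpace Ω] {P : Measure Ω}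
    [IsProbabilityMeasure P] {β : Type*} [MeasurableSpace β] {X : ι → Ω → β}
    (hmeas : ∀ i, Measurable (X i)) (hX : iIndepFun X P) {B : Set β} (hB : MeasurableSet B)
    {c : ι → ℝ} (hc : Monotone c) :
    ∫ ω, (⋃ i, X i ⁻¹' B).indicator (fun ω => sInf (c '' {i | X i ω ∈ B})) ω ∂P ≤
      (∑ i, P.real (X i ⁻¹' B) * c i) / (∑ i, P.real (X i ⁻¹' B)) *
        P.real (⋃ i, X i ⁻¹' B) := by
  set s : ι → Set Ω := fun i => X i ⁻¹' B
  set p : ι → ℝ := fun i => P.real (s i)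
  set w : ι → ℝ := fun k => ∏ j ∈ Iio k, (1 - p j)
  have hs : ∀ i, MeasurableSet (s i) := fun i => hmeas i hB
  have hd : ∀ k, MeasurableSet (disjointed s k) := measurableSet_disjointed hs
  have hreal : ∀ k, P.real (disjointed s k) = p k * w k := fun k => by
    rw [measureReal_def, hX.measure_disjointed_preimage hB k, ENNReal.toReal_mul,
      ENNReal.toReal_prod]
    refine congrArg _ (prod_congr rfl fun j _ => ?_)
    rw [Set.preimage_compl, ← measureReal_def, probReal_compl_eq_one_sub (hs j)]
  have hw : Antitone w :=
    (prod_anti_set_of_le_one (fun j => sub_nonneg.2 measureReal_le_one)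
      (fun j => sub_le_self _ measureReal_nonneg)).comp_monotone fun _ _ h => Iio_subset_Iio h
  have hint : ∫ ω, (⋃ i, s i).indicator (fun ω => sInf (c '' {i | X i ω ∈ B})) ω ∂P =
      ∑ k, p k * c k * w k := by
    rw [show (fun ω => (⋃ i, s i).indicator (fun ω => sInf (c '' {i | X i ω ∈ B})) ω) =
      fun ω => ∑ k, (disjointed s k).indicator (fun _ => c k) ω from
        funext (indicator_iUnion_sInf_image_eq_sum hc)]
    rw [integral_finsetSum _ fun k _ => (integrable_const _).indicator (hd k)]
    exact sum_congr rfl fun k _ => by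
      rw [integral_indicator_const _ (hd k), smul_eq_mul, hreal]; ring
  have hprob : P.real (⋃ i, s i) = ∑ k, p k * w k := by
    rw [← iUnion_disjointed, measureReal_iUnion_fintype (disjoint_disjointed s) hd]
    simp only [hreal]
  rw [hint, hprob]
  exact (hc.antivary hw).sum_mul_mul_le_div_mul univ fun i _ => measureReal_nonneg

end Disjointed

theorem Fintype.exists_monotone_comp_equivFin {ι α : Type*} [Fintype ι] [LinearOrder α]
    (c : ι → α) : ∃ e : Fin (Fintype.card ι) ≃ ι, Monotone (c ∘ e) :=
  let e₀ := (Fintype.equivFin ι).symm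
  ⟨(Tuple.sort (c ∘ e₀)).trans e₀, Tuple.monotone_sort (c ∘ e₀)⟩

theorem stmt_4_general {Ω ι : Type*} [MeasurableSpace Ω] (P : Measure Ω)
    [IsProbabilityMeasure P] [Fintype ι]
    (X : ι → Ω → ℝ) (hmeas : ∀ i, Measurable (X i))
    (y : ι → ℝ) (hy : ∀ i, 0 < y i ∧ y i ≤ 1)
    (hPy : ∀ i, P {ω | X i ω = 1} = ENNReal.ofReal (y i))
    (hindep : iIndepFun X P)
    (c : ι → ℝ) :
    ∫ ω, Set.indicator {ω | ∃ i, X i ω = 1}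
        (fun ω => sInf (c '' {i | X i ω = 1})) ω ∂P ≤
      ((∑ i, y i * c i) / (∑ i, y i)) * (P {ω | ∃ i, X i ω = 1}).toReal := by
  obtain ⟨e, he⟩ := Fintype.exists_monotone_comp_equivFin c
  have key := integral_indicator_sInf_le_of_monotone (X := fun k => X (e k))
    (fun k => hmeas (e k)) (hindep.precomp e.injective) (measurableSet_singleton 1) he
  have hy' : ∀ i, P.real (X i ⁻¹' {1}) = y i := fun i => by
    rw [measureReal_def, ← ENNReal.toReal_ofReal (hy i).1.le, ← hPy]; rfl
  have hE : ⋃ k, X (e k) ⁻¹' {1} = {ω | ∃ i, X i ω = 1} := by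
    ext ω; simp [e.surjective.exists]
  have himage : ∀ ω, (c ∘ e) '' {k | X (e k) ω ∈ ({1} : Set ℝ)} = c '' {i | X i ω = 1} :=
    fun ω => by rw [Set.image_comp]; exact congrArg _ (e.image_preimage {i | X i ω = 1})
  rw [hE] at key
  simp_rw [himage] at key
  simp only [Function.comp_apply, hy', e.sum_comp (fun i => y i * c i), e.sum_comp y] at key
  exact key

/-- Expected distance to the closest open facility: facilities `i` are opened
independently (indicator variables `X i` with `P(X i = 1) = y i`), and the
expected distance to the closest open facility (0 if none is open, enforced by
the indicator) is at most the weighted average distance `(∑ y i * c i)/(∑ y i)`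
times the probability that at least one facility is open. -/
theorem stmt_4 {Ω ι : Type*} [MeasurableSpace Ω] (P : Measure Ω)
    [IsProbabilityMeasure P] [Fintype ι] [Nonempty ι]
    (X : ι → Ω → ℝ) (hmeas : ∀ i, Measurable (X i))
    (hval : ∀ i, ∀ ω, X i ω = 0 ∨ X i ω = 1)
    (y : ι → ℝ) (hy : ∀ i, 0 < y i ∧ y i ≤ 1)
    (hPy : ∀ i, P {ω | X i ω = 1} = ENNReal.ofReal (y i))
    (hindep : iIndepFun X P)
    (c : ι → ℝ) (hc : ∀ i, 0 ≤ c i) :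
    ∫ ω, Set.indicator {ω | ∃ i, X i ω = 1}
        (fun ω => sInf (c '' {i | X i ω = 1})) ω ∂P ≤
      ((∑ i, y i * c i) / (∑ i, y i)) * (P {ω | ∃ i, X i ω = 1}).toReal :=
  stmt_4_general P X hmeas y hy hPy hindep c
end

section
/- Let γ₀ > 0 be the unique positive real satisfying 1/e + e^{−γ₀} − (γ₀ − 1)·(1 − 1/e + e^{−γ₀}) = 0. Let p_c, p_d, p_s be nonnegative reals with p_c + p_d + p_s = 1, p_c ≥ 1 − 1/e and p_s ≤ e^{−γ₀}, and let C ≥ 0, F ≥ 0 and r ∈ [0,1] be reals. Then (p_c + p_s)·(C − r·(γ₀ − 1)·F) + (p_d + 2·p_s)·(C + r·F) ≤ (1 + 2·e^{−γ₀})·C. -/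
/-- Per-client core of the main theorem: with `γ₀` the positive root of
`1/e + e^{-γ} - (γ-1)(1 - 1/e + e^{-γ}) = 0`, the expected connection cost of a
client with fractional connection cost `C`, facility cost `F` and irregularity
`r` is at most `(1 + 2 e^{-γ₀}) C`. -/
theorem stmt_8 (γ₀ : ℝ) (hγ₀pos : 0 < γ₀)
    (hγ₀ : 1 / Real.exp 1 + Real.exp (-γ₀) -
        (γ₀ - 1) * (1 - 1 / Real.exp 1 + Real.exp (-γ₀)) = 0)
    (pc pd ps : ℝ) (hpc : 0 ≤ pc) (hpd : 0 ≤ pd) (hps : 0 ≤ ps)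
    (hsum : pc + pd + ps = 1)
    (hpc' : pc ≥ 1 - 1 / Real.exp 1) (hps' : ps ≤ Real.exp (-γ₀))
    (C F r : ℝ) (hC : 0 ≤ C) (hF : 0 ≤ F) (hr0 : 0 ≤ r) (hr1 : r ≤ 1) :
    (pc + ps) * (C - r * (γ₀ - 1) * F) + (pd + 2 * ps) * (C + r * F) ≤
      (1 + 2 * Real.exp (-γ₀)) * C := by
  set t := Real.exp (-γ₀) with ht
  have ht0 : 0 < t := Real.exp_pos _
  have he : (2:ℝ) < Real.exp 1 := by
    have := Real.add_one_lt_exp (x := 1) one_ne_zero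
    linarith
  have hie : 0 < 1 / Real.exp 1 := by positivity
  have hie1 : 1 / Real.exp 1 < 1/2 := by
    rw [div_lt_div_iff₀ (Real.exp_pos 1) two_pos]; linarith
  -- A = 1 - 1/e + t > 0
  have hA : (0:ℝ) < 1 - 1 / Real.exp 1 + t := by linarith
  have hγ1 : 1 < γ₀ := by nlinarith
  have hγ2 : γ₀ ≤ 2 := by nlinarith
  -- coefficient of r*F
  have hK : pd + 2 * ps - (γ₀ - 1) * (pc + ps) ≤ 0 := by nlinarith
  have hrF : 0 ≤ r * F := mul_nonneg hr0 hF
  nlinarith [mul_nonpos_of_nonneg_of_nonpos hrF hK, mul_nonneg hC (sub_nonneg.2 hps')]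
end
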